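/- The automorphism group of the graph P (Petersen graph realized on 3-element subsets of {1,2,3,4,5}, with adjacency |A ∩ B| = 1) has exactly 120 elements. -/

import Mathlib

/-- The Petersen graph, realized on the 3-element subsets of a 5-element set:
two such subsets are adjacent when their intersection has exactly one element. -/
def Petersen : SimpleGraph {A : Finset (Fin 5) // A.card = 3} where
  Adj A B := ((A : Finset (Fin 5)) ∩ B).card = 1
  symm := by
    constructor
    intro A B h
    rwa [Finset.inter_comm]
  loopless := by
    constructor
    rintro ⟨A, hA⟩ h
    simp only [Finset.inter_self] at h
    omega

/-! Relabelling the ground set by `σ ∈ S₅` preserves intersection sizes, so it induces an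
automorphism of `P`, and distinct permutations induce distinct automorphisms because every point
is the intersection of two triples. Conversely, the independent 4-sets of `P` are exactly the
stars `{A | m ∉ A}` (a finite check), so an automorphism permutes the stars, and it is the
automorphism induced by the corresponding permutation of the points. -/

theorem SimpleGraph.IsNIndepSet.map_iso {α β : Type*} {G : SimpleGraph α} {H : SimpleGraph β}
    {n : ℕ} {s : Finset α} (h : G.IsNIndepSet n s) (f : G ≃g H) :
    H.IsNIndepSet n (s.map f.toEquiv.toEmbedding) := by
  rw [SimpleGraph.isNIndepSet_iff] at h ⊢
  refine ⟨?_, by rw [Finset.card_map, h.2]⟩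
  rw [Finset.coe_map]
  exact Set.Pairwise.image fun _ ha _ hb hne => f.map_adj_iff.not.mpr (h.1 ha hb hne)

namespace Petersen

abbrev Triple := {A : Finset (Fin 5) // A.card = 3}

instance : DecidableRel Petersen.Adj := fun A B =>
  inferInstanceAs (Decidable ((A.1 ∩ B.1).card = 1))

def ofPerm (σ : Equiv.Perm (Fin 5)) : Petersen ≃g Petersen where
  toEquiv := σ.finsetCongr.subtypeEquiv fun A => by simp
  map_rel_iff' {A B} := by
    change (A.1.map _ ∩ B.1.map _).card = 1 ↔ (A.1 ∩ B.1).card = 1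
    rw [← Finset.map_inter, Finset.card_map]

theorem coe_ofPerm_apply (σ : Equiv.Perm (Fin 5)) (A : Triple) :
    (ofPerm σ A : Finset (Fin 5)) = A.1.map σ.toEmbedding := rfl

theorem exists_inter_eq_singleton : ∀ m : Fin 5, ∃ A B : Triple, A.1 ∩ B.1 = {m} := by
  decide

theorem ofPerm_injective : Function.Injective ofPerm := by
  intro σ τ h
  refine Equiv.ext fun m => ?_
  obtain ⟨A, B, hAB⟩ := exists_inter_eq_singleton m
  have inter_ofPerm (π : Equiv.Perm (Fin 5)) : (ofPerm π A).1 ∩ (ofPerm π B).1 = {π m} := by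
    rw [coe_ofPerm_apply, coe_ofPerm_apply, ← Finset.map_inter, hAB, Finset.map_singleton]
    rfl
  have := inter_ofPerm σ
  rw [h, inter_ofPerm τ] at this
  exact (Finset.singleton_injective this).symm

def avoiding (m : Fin 5) : Finset Triple := {A | m ∉ A.1}

theorem mem_avoiding {m : Fin 5} {A : Triple} : A ∈ avoiding m ↔ m ∉ A.1 := by
  simp [avoiding]

theorem avoiding_injective : Function.Injective avoiding := by
  decide

theorem isNIndepSet_four_iff :
    ∀ s : Finset Triple, Petersen.IsNIndepSet 4 s ↔ ∃ m, s = avoiding m := by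
  decide +kernel

theorem ofPerm_surjective : Function.Surjective ofPerm := by
  intro f
  choose τ hτ using fun m =>
    (isNIndepSet_four_iff _).1 (((isNIndepSet_four_iff _).2 ⟨m, rfl⟩).map_iso f)
  have mem_iff (A : Triple) (m : Fin 5) : τ m ∈ (f A).1 ↔ m ∈ A.1 := by
    rw [← not_iff_not, ← mem_avoiding, ← mem_avoiding, ← hτ]
    exact Finset.mem_map' f.toEquiv.toEmbedding
  have τ_injective : Function.Injective τ := fun m m' h =>
    avoiding_injective (Finset.map_injective _ (by rw [hτ, hτ, h]))
  let σ := Equiv.ofBijective τ (Finite.injective_iff_bijective.1 τ_injective)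
  refine ⟨σ, RelIso.ext fun A => Subtype.ext (Finset.ext fun x => ?_)⟩
  obtain ⟨m, rfl⟩ := σ.surjective x
  rw [coe_ofPerm_apply, Finset.mem_map_equiv, σ.symm_apply_apply]
  exact (mem_iff A m).symm

end Petersen

/-- The automorphism group of the Petersen graph has exactly 120 elements. -/
theorem petersen_aut_card : Nat.card (Petersen ≃g Petersen) = 120 := by
  have ofPerm_bijective := And.intro Petersen.ofPerm_injective Petersen.ofPerm_surjective
  rw [← Nat.card_congr (Equiv.ofBijective _ ofPerm_bijective), Nat.card_perm, Nat.card_fin]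
  rfl
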